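/- arXiv:2604.08144 — 2 statements merged into one kernel-verified Lean document; each statement's English description precedes it below -/
import Mathlib

section
/- Let G=(V,E) be a connected finite graph, α ∈ (0,1), and let w(t) be the unique global solution of the entropy flow on [0,+∞). Suppose that for every edge τ ∈ E there exists w_τ^* > 0 with lim_{t→+∞} w_τ(t) = w_τ^*. Then for every edge τ ∈ E, lim_{t→+∞} 𝔇_τ^α(t) = 𝔇_τ^* = 0, where 𝔇_τ^* denotes the edge entropy on τ with respect to the limiting weight vector w^*. -/
open Finset Filter Topology

namespace EntropyFlowPaper

variable {V : Type*} [Fintype V] [DecidableEq V]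

/-- Effective weight: the value of `w` on edges, `0` on non-edges. -/
noncomputable def ew (G : SimpleGraph V) [DecidableRel G.Adj] (w : Sym2 V → ℝ) (a b : V) : ℝ :=
  if G.Adj a b then w s(a, b) else 0

/-- Auxiliary layers: `(layerAux G x j).1 = N_j(x)` and `(layerAux G x j).2 = ⋃_{k ≤ j} N_k(x)`:
the `(j+1)`-st layer consists of the vertices adjacent to `⋃_{k ≤ j} N_k(x)` that do not lie
in `⋃_{k ≤ j} N_k(x)`. -/
def layerAux (G : SimpleGraph V) [DecidableRel G.Adj] (x : V) : ℕ → Finset V × Finset V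
  | 0 => ({x}, {x})
  | (j + 1) =>
      let p := layerAux G x j
      let next := Finset.univ.filter fun u => u ∉ p.2 ∧ ∃ a ∈ p.2, G.Adj u a
      (next, p.2 ∪ next)

/-- The `j`-step neighbor set `N_j(x)`. -/
def layer (G : SimpleGraph V) [DecidableRel G.Adj] (x : V) (j : ℕ) : Finset V :=
  (layerAux G x j).1

/-- The outward-walk probability `P(x, z)`, for `z` in the `ℓ`-th layer `N_ℓ(x)`:
`P(x,z) = Σ_{chains x = z₀, z₁ ∈ N₁(x), …, z_{ℓ-1} ∈ N_{ℓ-1}(x), z_ℓ = z}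
  Π_k w_{z_{k-1} z_k} / (Σ_{u ∈ N_k(x)} w_{z_{k-1} u})`, written recursively. -/
noncomputable def outP (G : SimpleGraph V) [DecidableRel G.Adj] (w : Sym2 V → ℝ) (x : V) :
    ℕ → V → ℝ
  | 0, z => if z = x then 1 else 0
  | (ℓ + 1), z => ∑ y ∈ layer G x ℓ,
      outP G w x ℓ y * ew G w y z / ∑ u ∈ layer G x (ℓ + 1), ew G w y u

/-- The `α`-lazy outward random walk `R_x^α(z)`: it equals `α` at `z = x`; for `z ∈ N_j(x)`
(`j ≥ 1`) it equals `(1-α)^j * α * P(x,z)` if `z` is adjacent to `N_{j+1}(x)`, and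
`(1-α)^j * P(x,z)` otherwise. -/
noncomputable def lazyWalk (G : SimpleGraph V) [DecidableRel G.Adj] (w : Sym2 V → ℝ) (α : ℝ)
    (x z : V) : ℝ :=
  if z = x then α
  else ∑ j ∈ Finset.Icc 1 (Fintype.card V),
    (if z ∈ layer G x j then
      (if ∃ u ∈ layer G x (j + 1), G.Adj z u then (1 - α) ^ j * α * outP G w x j z
       else (1 - α) ^ j * outP G w x j z)
     else 0)

/-- Kullback–Leibler divergence `D_KL(P, Q) = Σ_z P z * log (P z / Q z)` on a finite set. -/
noncomputable def KL (P Q : V → ℝ) : ℝ := ∑ z, P z * Real.log (P z / Q z)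

/-- The edge entropy `𝔇_e^α = D_KL(R_x^α, R_y^α) + D_KL(R_y^α, R_x^α)` for the edge `e = xy`. -/
noncomputable def entropyD (G : SimpleGraph V) [DecidableRel G.Adj] (w : Sym2 V → ℝ) (α : ℝ)
    (x y : V) : ℝ :=
  KL (lazyWalk G w α x) (lazyWalk G w α y) + KL (lazyWalk G w α y) (lazyWalk G w α x)

/-- Euclidean distance `|w - w'|` between two weight vectors, over the edges of `G`. -/
noncomputable def wdist (G : SimpleGraph V) [DecidableRel G.Adj] (w w' : Sym2 V → ℝ) : ℝ :=
  Real.sqrt (∑ e ∈ G.edgeFinset, (w e - w' e) ^ 2)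

/-- `w` is a solution of the entropy flow `w_e'(t) = 𝔇_e^α(t)`, `w_e(t) > 0`, `w_e(0) = w0_e`
on the time set `S`. -/
def IsEntropyFlowSolutionOn (G : SimpleGraph V) [DecidableRel G.Adj] (α : ℝ)
    (w0 : Sym2 V → ℝ) (S : Set ℝ) (w : ℝ → Sym2 V → ℝ) : Prop :=
  (∀ e ∈ G.edgeFinset, w 0 e = w0 e) ∧
  (∀ t ∈ S, ∀ e ∈ G.edgeFinset, 0 < w t e) ∧
  (∀ t ∈ S, ∀ x y : V, G.Adj x y →
    HasDerivWithinAt (fun τ => w τ s(x, y)) (entropyD G (w t) α x y) S t)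

set_option linter.unusedSectionVars false

variable {G : SimpleGraph V} [DecidableRel G.Adj]

/-! ### congruence lemmas -/

theorem ew_congr {w w' : Sym2 V → ℝ} (h : ∀ e ∈ G.edgeFinset, w e = w' e) (a b : V) :
    ew G w a b = ew G w' a b := by
  unfold ew
  split_ifs with hab
  · exact h _ (by simpa [SimpleGraph.mem_edgeFinset] using hab)
  · rfl

theorem outP_congr {w w' : Sym2 V → ℝ} (h : ∀ e ∈ G.edgeFinset, w e = w' e) (x : V) (ℓ : ℕ)
    (z : V) : outP G w x ℓ z = outP G w' x ℓ z := by
  induction ℓ generalizing z with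
  | zero => rfl
  | succ ℓ ih =>
      simp only [outP]
      refine Finset.sum_congr rfl fun y _ => ?_
      rw [ih, ew_congr h]
      congr 1
      exact Finset.sum_congr rfl fun u _ => ew_congr h y u

theorem lazyWalk_congr {w w' : Sym2 V → ℝ} (h : ∀ e ∈ G.edgeFinset, w e = w' e) (α : ℝ)
    (x z : V) : lazyWalk G w α x z = lazyWalk G w' α x z := by
  unfold lazyWalk
  split_ifs with hz
  · rfl
  · exact Finset.sum_congr rfl fun j _ => by rw [outP_congr h]

theorem entropyD_congr {w w' : Sym2 V → ℝ} (h : ∀ e ∈ G.edgeFinset, w e = w' e) (α : ℝ)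
    (x y : V) : entropyD G w α x y = entropyD G w' α x y := by
  unfold entropyD KL
  simp only [lazyWalk_congr h]

/-! ### nonnegativity / positivity -/

theorem ew_nonneg {w : Sym2 V → ℝ} (hw : ∀ e ∈ G.edgeFinset, 0 ≤ w e) (a b : V) :
    0 ≤ ew G w a b := by
  unfold ew
  split_ifs with hab
  · exact hw _ (by simpa [SimpleGraph.mem_edgeFinset] using hab)
  · exact le_refl _

theorem outP_nonneg {w : Sym2 V → ℝ} (hw : ∀ e ∈ G.edgeFinset, 0 ≤ w e) (x : V) (ℓ : ℕ)
    (z : V) : 0 ≤ outP G w x ℓ z := by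
  induction ℓ generalizing z with
  | zero => unfold outP; positivity
  | succ ℓ ih =>
      simp only [outP]
      refine Finset.sum_nonneg fun y _ => ?_
      have h1 := ih y
      have h2 := ew_nonneg hw y z
      have h3 : (0:ℝ) ≤ ∑ u ∈ layer G x (ℓ+1), ew G w y u :=
        Finset.sum_nonneg fun u _ => ew_nonneg hw y u
      positivity

theorem lazyWalk_nonneg {w : Sym2 V → ℝ} (hw : ∀ e ∈ G.edgeFinset, 0 ≤ w e) {α : ℝ}
    (hα : α ∈ Set.Ioo (0:ℝ) 1) (x z : V) : 0 ≤ lazyWalk G w α x z := by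
  obtain ⟨hα0, hα1⟩ := hα
  unfold lazyWalk
  split_ifs with hz
  · exact hα0.le
  · refine Finset.sum_nonneg fun j _ => ?_
    have h1 : (0:ℝ) ≤ (1 - α) ^ j := pow_nonneg (by linarith) j
    have h2 := outP_nonneg hw x j z
    split_ifs <;> first | positivity | rfl



theorem layerAux_snd_succ (x : V) (n : ℕ) :
    (layerAux G x (n+1)).2 = (layerAux G x n).2 ∪ layer G x (n+1) := rfl

theorem mem_layer_succ_iff {x z : V} {n : ℕ} :
    z ∈ layer G x (n+1) ↔ z ∉ (layerAux G x n).2 ∧ ∃ a ∈ (layerAux G x n).2, G.Adj z a := by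
  simp [layer, layerAux, Finset.mem_filter]

theorem layerAux_snd_subset_succ (x : V) (n : ℕ) :
    (layerAux G x n).2 ⊆ (layerAux G x (n+1)).2 := by
  rw [layerAux_snd_succ]; exact Finset.subset_union_left

theorem mem_layerAux_snd_self (x : V) (n : ℕ) : x ∈ (layerAux G x n).2 := by
  induction n with
  | zero => simp [layerAux]
  | succ n ih => exact layerAux_snd_subset_succ x n ih

theorem exists_adj_prev_layer {x z : V} {ℓ : ℕ} (hz : z ∈ layer G x (ℓ+1)) :
    ∃ y ∈ layer G x ℓ, G.Adj y z := by
  rw [mem_layer_succ_iff] at hz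
  obtain ⟨hnz, a, ha, hadj⟩ := hz
  cases ℓ with
  | zero =>
      refine ⟨a, ?_, hadj.symm⟩
      simpa [layer, layerAux] using ha
  | succ m =>
      rw [layerAux_snd_succ] at ha
      rcases Finset.mem_union.1 ha with ha' | ha'
      · exfalso
        apply hnz
        rw [layerAux_snd_succ]
        refine Finset.mem_union.2 (Or.inr ?_)
        rw [mem_layer_succ_iff]
        exact ⟨fun h => hnz (layerAux_snd_subset_succ x m h), a, ha', hadj⟩
      · exact ⟨a, ha', hadj.symm⟩

theorem crossing_of_walk {x : V} {n : ℕ} :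
    ∀ {a z : V} (_ : G.Walk a z), a ∈ (layerAux G x n).2 →
      z ∈ (layerAux G x n).2 ∨ ∃ u, u ∉ (layerAux G x n).2 ∧ ∃ b ∈ (layerAux G x n).2, G.Adj u b := by
  intro a z p
  induction p with
  | nil => intro h; exact Or.inl h
  | @cons a b z h q ih =>
      intro ha
      by_cases hb : b ∈ (layerAux G x n).2
      · exact ih hb
      · exact Or.inr ⟨b, hb, a, ha, h.symm⟩

theorem layerAux_card_or (hG : G.Connected) (x : V) :
    ∀ n : ℕ, (layerAux G x n).2 = Finset.univ ∨ n + 1 ≤ (layerAux G x n).2.card := by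
  intro n
  induction n with
  | zero => right; simp [layerAux]
  | succ n ih =>
      rcases ih with h | h
      · left
        exact Finset.univ_subset_iff.1 (h ▸ layerAux_snd_subset_succ x n)
      · by_cases hu : (layerAux G x n).2 = Finset.univ
        · left; exact Finset.univ_subset_iff.1 (hu ▸ layerAux_snd_subset_succ x n)
        · right
          -- there's a vertex outside, get crossing edge
          obtain ⟨z, hz⟩ : ∃ z, z ∉ (layerAux G x n).2 := by
            by_contra hc
            push_neg at hc
            exact hu (Finset.eq_univ_iff_forall.2 hc)
          have hwalk := (hG x z).some
          rcases crossing_of_walk (x := x) (n := n) hwalk (mem_layerAux_snd_self x n) with h1 | h1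
          · exact absurd h1 hz
          · obtain ⟨u, hu1, b, hb, hadj⟩ := h1
            have hmem : u ∈ layer G x (n+1) := by
              rw [mem_layer_succ_iff]; exact ⟨hu1, b, hb, hadj⟩
            have : (layerAux G x n).2.card + 1 ≤ ((layerAux G x n).2 ∪ layer G x (n+1)).card := by
              have := Finset.card_lt_card (Finset.ssubset_iff_of_subset Finset.subset_union_left |>.2
                ⟨u, Finset.mem_union_right _ hmem, hu1⟩)
              omega
            rw [layerAux_snd_succ]
            omega

theorem layerAux_snd_eq_univ (hG : G.Connected) (x : V) :
    (layerAux G x (Fintype.card V)).2 = Finset.univ := by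
  rcases layerAux_card_or hG x (Fintype.card V) with h | h
  · exact h
  · exfalso
    have := Finset.card_le_univ (layerAux G x (Fintype.card V)).2
    omega

theorem exists_layer_of_mem_snd {x z : V} {n : ℕ} (h : z ∈ (layerAux G x n).2) :
    ∃ k ≤ n, z ∈ layer G x k := by
  induction n with
  | zero => exact ⟨0, le_refl 0, h⟩
  | succ n ih =>
      rw [layerAux_snd_succ] at h
      rcases Finset.mem_union.1 h with h | h
      · obtain ⟨k, hk, hz⟩ := ih h
        exact ⟨k, hk.trans (Nat.le_succ n), hz⟩
      · exact ⟨n+1, le_refl _, h⟩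

theorem exists_layer_mem_Icc (hG : G.Connected) {x z : V} (hz : z ≠ x) :
    ∃ j ∈ Finset.Icc 1 (Fintype.card V), z ∈ layer G x j := by
  have h : z ∈ (layerAux G x (Fintype.card V)).2 := by
    rw [layerAux_snd_eq_univ hG]; exact Finset.mem_univ z
  obtain ⟨k, hk, hmem⟩ := exists_layer_of_mem_snd h
  refine ⟨k, Finset.mem_Icc.2 ⟨?_, hk⟩, hmem⟩
  rcases Nat.eq_zero_or_pos k with h0 | h0
  · exfalso; subst h0; simp [layer, layerAux] at hmem; exact hz hmem
  · exact h0


/-! ### positivity at a positive weight vector -/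

theorem outP_pos {w : Sym2 V → ℝ} (hw : ∀ e ∈ G.edgeFinset, 0 < w e) (x : V) :
    ∀ ℓ : ℕ, ∀ z ∈ layer G x ℓ, 0 < outP G w x ℓ z := by
  have hw' : ∀ e ∈ G.edgeFinset, 0 ≤ w e := fun e he => (hw e he).le
  intro ℓ
  induction ℓ with
  | zero =>
      intro z hz
      have : z = x := by simpa [layer, layerAux] using hz
      simp [outP, this]
  | succ ℓ ih =>
      intro z hz
      obtain ⟨y, hy, hadj⟩ := exists_adj_prev_layer hz
      have hterm : 0 < outP G w x ℓ y * ew G w y z / ∑ u ∈ layer G x (ℓ+1), ew G w y u := by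
        have h1 : 0 < outP G w x ℓ y := ih y hy
        have h2 : 0 < ew G w y z := by
          unfold ew
          rw [if_pos hadj]
          exact hw _ (by simpa [SimpleGraph.mem_edgeFinset] using hadj)
        have h3 : 0 < ∑ u ∈ layer G x (ℓ+1), ew G w y u := by
          refine lt_of_lt_of_le h2 ?_
          exact Finset.single_le_sum (fun u _ => ew_nonneg hw' y u) hz
        positivity
      simp only [outP]
      refine lt_of_lt_of_le hterm ?_
      refine Finset.single_le_sum (f := fun y => outP G w x ℓ y * ew G w y z /
        ∑ u ∈ layer G x (ℓ+1), ew G w y u) (fun y' _ => ?_) hy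
      have h1 := outP_nonneg hw' x ℓ y'
      have h2 := ew_nonneg hw' y' z
      have h3 : (0:ℝ) ≤ ∑ u ∈ layer G x (ℓ+1), ew G w y' u :=
        Finset.sum_nonneg fun u _ => ew_nonneg hw' y' u
      positivity

theorem lazyWalk_pos (hG : G.Connected) {w : Sym2 V → ℝ}
    (hw : ∀ e ∈ G.edgeFinset, 0 < w e) {α : ℝ} (hα : α ∈ Set.Ioo (0:ℝ) 1) (x z : V) :
    0 < lazyWalk G w α x z := by
  obtain ⟨hα0, hα1⟩ := hα
  have hw' : ∀ e ∈ G.edgeFinset, 0 ≤ w e := fun e he => (hw e he).le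
  unfold lazyWalk
  split_ifs with hz
  · exact hα0
  · obtain ⟨j, hj, hmem⟩ := exists_layer_mem_Icc hG hz
    have h1a : (0:ℝ) < (1 - α) ^ j := pow_pos (by linarith) j
    refine Finset.sum_pos' (fun k _ => ?_) ⟨j, hj, ?_⟩
    · have h1 : (0:ℝ) ≤ (1 - α) ^ k := pow_nonneg (by linarith) k
      have h2 := outP_nonneg hw' x k z
      split_ifs <;> positivity
    · rw [if_pos hmem]
      have h2 := outP_pos hw x j z hmem
      split_ifs <;> positivity

/-! ### nonnegativity of the edge entropy  -/

theorem entropyD_nonneg {w : Sym2 V → ℝ} (hw : ∀ e ∈ G.edgeFinset, 0 ≤ w e) {α : ℝ}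
    (hα : α ∈ Set.Ioo (0:ℝ) 1) (x y : V) : 0 ≤ entropyD G w α x y := by
  unfold entropyD KL
  rw [← Finset.sum_add_distrib]
  refine Finset.sum_nonneg fun z _ => ?_
  set p := lazyWalk G w α x z with hp
  set q := lazyWalk G w α y z with hq
  have hp0 : 0 ≤ p := lazyWalk_nonneg hw hα x z
  have hq0 : 0 ≤ q := lazyWalk_nonneg hw hα y z
  rcases eq_or_lt_of_le hp0 with hp0' | hp0'
  · rcases eq_or_lt_of_le hq0 with hq0' | hq0'
    · simp [← hp0', ← hq0']
    · simp [← hp0', div_zero, Real.log_zero]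
  · rcases eq_or_lt_of_le hq0 with hq0' | hq0'
    · simp [← hq0']
    · -- both positive
      have hlog : Real.log (q / p) = - Real.log (p / q) := by
        rw [← Real.log_inv]
        congr 1
        field_simp
      rw [hlog]
      have hkey : p * Real.log (p / q) + q * -Real.log (p / q)
          = (p - q) * Real.log (p / q) := by ring
      rw [hkey]
      rcases le_total q p with hle | hle
      · apply mul_nonneg (by linarith)
        apply Real.log_nonneg
        rw [le_div_iff₀ hq0']
        linarith
      · have hrw : (p - q) * Real.log (p / q) = (q - p) * (-Real.log (p / q)) := by ring
        rw [hrw]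
        apply mul_nonneg (by linarith)
        rw [neg_nonneg]
        apply Real.log_nonpos (by positivity)
        rw [div_le_one hq0']
        exact hle


/-! ### continuity in the weight vector -/

theorem continuousAt_sum' {ι X : Type*} [TopologicalSpace X] (s : Finset ι) {f : ι → X → ℝ}
    {x : X} (h : ∀ i ∈ s, ContinuousAt (f i) x) :
    ContinuousAt (fun w => ∑ i ∈ s, f i w) x :=
  tendsto_finset_sum s h

theorem continuous_ew (a b : V) : Continuous (fun w : Sym2 V → ℝ => ew G w a b) := by
  by_cases hab : G.Adj a b
  · simp only [ew, if_pos hab]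
    exact continuous_apply _
  · simp only [ew, if_neg hab]
    exact continuous_const

theorem continuousAt_outP {wstar : Sym2 V → ℝ} (hstar : ∀ e ∈ G.edgeFinset, 0 < wstar e)
    (x : V) : ∀ ℓ : ℕ, ∀ z ∈ layer G x ℓ,
      ContinuousAt (fun w : Sym2 V → ℝ => outP G w x ℓ z) wstar := by
  intro ℓ
  induction ℓ with
  | zero => intro z _; simp only [outP]; exact continuousAt_const
  | succ ℓ ih =>
      intro z hz
      simp only [outP]
      refine continuousAt_sum' _ fun y hy => ?_
      by_cases hD : (∑ u ∈ layer G x (ℓ+1), ew G wstar y u) = 0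
      · -- then y has no neighbour in layer ℓ+1 and the summand is identically 0
        have hno : ∀ u ∈ layer G x (ℓ+1), ¬ G.Adj y u := by
          intro u hu hadj
          have hpos : 0 < ew G wstar y u := by
            unfold ew; rw [if_pos hadj]
            exact hstar _ (by simpa [SimpleGraph.mem_edgeFinset] using hadj)
          have hle : ew G wstar y u ≤ ∑ u ∈ layer G x (ℓ+1), ew G wstar y u :=
            Finset.single_le_sum (fun v _ => ew_nonneg (fun e he => (hstar e he).le) y v) hu
          rw [hD] at hle
          linarith
        have hzero : (fun w : Sym2 V → ℝ => outP G w x ℓ y * ew G w y z /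
            ∑ u ∈ layer G x (ℓ+1), ew G w y u) = fun _ => (0:ℝ) := by
          funext w
          have : ew G w y z = 0 := by unfold ew; rw [if_neg (hno z hz)]
          rw [this, mul_zero, zero_div]
        rw [hzero]
        exact continuousAt_const
      · refine ContinuousAt.div ?_ ?_ hD
        · exact (ih y hy).mul (continuous_ew y z).continuousAt
        · exact continuousAt_sum' _ fun u _ => (continuous_ew y u).continuousAt

theorem continuousAt_lazyWalk {wstar : Sym2 V → ℝ} (hstar : ∀ e ∈ G.edgeFinset, 0 < wstar e)
    (α : ℝ) (x z : V) : ContinuousAt (fun w : Sym2 V → ℝ => lazyWalk G w α x z) wstar := by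
  by_cases hz : z = x
  · simp only [lazyWalk, if_pos hz]; exact continuousAt_const
  · simp only [lazyWalk, if_neg hz]
    refine continuousAt_sum' _ fun j _ => ?_
    by_cases hmem : z ∈ layer G x j
    · simp only [if_pos hmem]
      by_cases hadj : ∃ u ∈ layer G x (j+1), G.Adj z u
      · simp only [if_pos hadj]
        exact continuousAt_const.mul (continuousAt_outP hstar x j z hmem)
      · simp only [if_neg hadj]
        exact continuousAt_const.mul (continuousAt_outP hstar x j z hmem)
    · simp only [if_neg hmem]; exact continuousAt_const

theorem continuousAt_entropyD (hG : G.Connected) {wstar : Sym2 V → ℝ}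
    (hstar : ∀ e ∈ G.edgeFinset, 0 < wstar e) {α : ℝ} (hα : α ∈ Set.Ioo (0:ℝ) 1) (x y : V) :
    ContinuousAt (fun w : Sym2 V → ℝ => entropyD G w α x y) wstar := by
  have key : ∀ a b : V, ContinuousAt
      (fun w : Sym2 V → ℝ => KL (lazyWalk G w α a) (lazyWalk G w α b)) wstar := by
    intro a b
    unfold KL
    refine continuousAt_sum' _ fun z _ => ?_
    have hpa : 0 < lazyWalk G wstar α a z := lazyWalk_pos hG hstar hα a z
    have hpb : 0 < lazyWalk G wstar α b z := lazyWalk_pos hG hstar hα b z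
    refine (continuousAt_lazyWalk hstar α a z).mul ?_
    refine ContinuousAt.log ?_ ?_
    · exact (continuousAt_lazyWalk hstar α a z).div (continuousAt_lazyWalk hstar α b z) hpb.ne'
    · positivity
  unfold entropyD
  exact (key x y).add (key y x)


end EntropyFlowPaper

open EntropyFlowPaper

/-- if along the global solution of the entropy flow every edge weight converges to
a positive limit `w_τ^*`, then every edge entropy tends to `0` and the edge entropies of the
limiting weight vector `w^*` vanish. -/
theorem entropyFlow_entropy_tendsto_zero {V : Type*} [Fintype V] [DecidableEq V]
    (G : SimpleGraph V) [DecidableRel G.Adj] (hG : G.Connected)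
    (α : ℝ) (hα : α ∈ Set.Ioo (0 : ℝ) 1)
    (w0 : Sym2 V → ℝ) (hw0 : ∀ e ∈ G.edgeFinset, 0 < w0 e)
    (w : ℝ → Sym2 V → ℝ)
    (hsol : IsEntropyFlowSolutionOn G α w0 (Set.Ici 0) w)
    (wstar : Sym2 V → ℝ) (hstar : ∀ e ∈ G.edgeFinset, 0 < wstar e)
    (hlim : ∀ x y : V, G.Adj x y →
      Tendsto (fun t => w t s(x, y)) atTop (𝓝 (wstar s(x, y)))) :
    ∀ x y : V, G.Adj x y →
      Tendsto (fun t => entropyD G (w t) α x y) atTop (𝓝 (0 : ℝ)) ∧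
      entropyD G wstar α x y = 0 := by
  classical
  intro x y hxy
  -- the modified weight path, equal to `w t` on edges and to `wstar` off edges
  set w' : ℝ → Sym2 V → ℝ := fun t e => if e ∈ G.edgeFinset then w t e else wstar e with hw'
  have hlim' : ∀ e ∈ G.edgeFinset, Tendsto (fun t => w t e) atTop (𝓝 (wstar e)) := by
    intro e
    induction e using Sym2.ind with
    | _ a b =>
        intro he
        exact hlim a b (by simpa [SimpleGraph.mem_edgeFinset] using he)
  have h1 : Tendsto w' atTop (𝓝 wstar) := by
    rw [tendsto_pi_nhds]
    intro e
    by_cases he : e ∈ G.edgeFinset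
    · refine (hlim' e he).congr fun t => ?_
      simp only [hw']
      rw [if_pos he]
    · simp only [hw', if_neg he]
      exact tendsto_const_nhds
  have hDt : Tendsto (fun t => entropyD G (w t) α x y) atTop
      (𝓝 (entropyD G wstar α x y)) := by
    have h2 := (continuousAt_entropyD hG hstar hα x y).tendsto.comp h1
    refine h2.congr fun t => ?_
    exact entropyD_congr (fun e he => by simp only [hw']; rw [if_pos he]) α x y
  have hDnn : 0 ≤ entropyD G wstar α x y :=
    entropyD_nonneg (fun e he => (hstar e he).le) hα x y
  have hDle : entropyD G wstar α x y ≤ 0 := by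
    by_contra hpos
    push_neg at hpos
    set D := entropyD G wstar α x y with hD
    -- eventually the entropy along the flow exceeds D/2
    have hev : ∀ᶠ t in atTop, D / 2 < entropyD G (w t) α x y :=
      hDt.eventually (lt_mem_nhds (half_lt_self hpos))
    obtain ⟨T, hT⟩ := (hev.and (eventually_ge_atTop (1:ℝ))).exists_forall_of_atTop
    have hT1 : (1:ℝ) ≤ T := (hT T le_rfl).2
    have hT0 : (0:ℝ) ≤ T := by linarith
    have hef : s(x, y) ∈ G.edgeFinset := SimpleGraph.mem_edgeFinset.2 hxy
    have hderiv : ∀ t ∈ Set.Ici T, HasDerivWithinAt (fun τ => w τ s(x, y) - D / 2 * τ)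
        (entropyD G (w t) α x y - D / 2) (Set.Ici T) t := by
      intro t ht
      have h0 : t ∈ Set.Ici (0:ℝ) := le_trans hT0 ht
      have hd := hsol.2.2 t h0 x y hxy
      have hlin : HasDerivWithinAt (fun τ : ℝ => D / 2 * τ) (D / 2) (Set.Ici T) t := by
        simpa using ((hasDerivAt_id t).const_mul (D / 2)).hasDerivWithinAt (s := Set.Ici T)
      exact (hd.mono (Set.Ici_subset_Ici.2 hT0)).sub hlin
    have hmono : MonotoneOn (fun τ => w τ s(x, y) - D / 2 * τ) (Set.Ici T) := by
      refine monotoneOn_of_hasDerivWithinAt_nonneg (convex_Ici T)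
        (fun t ht => (hderiv t ht).continuousWithinAt)
        (f' := fun t => entropyD G (w t) α x y - D / 2)
        (fun t ht => (hderiv t (interior_subset ht)).mono interior_subset)
        (fun t ht => ?_)
      have htT : T ≤ t := le_of_lt (by simpa [interior_Ici] using ht)
      linarith [(hT t htT).1]
    have hgrow : ∀ t ≥ T, w T s(x, y) - D / 2 * T + D / 2 * t ≤ w t s(x, y) := by
      intro t ht
      have := hmono (Set.self_mem_Ici) (ht : t ∈ Set.Ici T) ht
      simp only at this
      linarith
    have hatTop : Tendsto (fun t => w t s(x, y)) atTop atTop := by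
      refine tendsto_atTop_mono' atTop (f₁ := fun t => w T s(x, y) - D / 2 * T + D / 2 * t) ?_ ?_
      · filter_upwards [eventually_ge_atTop T] with t ht using hgrow t ht
      · exact tendsto_atTop_add_const_left _ _
          (Tendsto.const_mul_atTop (half_pos hpos) tendsto_id)
    exact not_tendsto_atTop_of_tendsto_nhds (hlim x y hxy) hatTop
  refine ⟨?_, le_antisymm hDle hDnn⟩
  rw [← le_antisymm hDle hDnn]
  exact hDt
end

section
/- Let G=(V,E,w_0) be a triangle with vertex set V={x,y,z}, edge set E={xy,yz,xz}, and initial weight w_0 = (w_{0,xy}, w_{0,yz}, w_{0,xz}) ∈ ℝ^3_+. Let α ∈ (0,1) and let w(t) = (w_{xy}(t), w_{yz}(t), w_{xz}(t)) be the unique global solution of the entropy flow w_e'(t) = 𝔇_e^α(t) with w(0) = w_0. If α ≠ 1/3, then w_e(t) → +∞ as t → +∞ for every edge e ∈ E. -/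
open Finset Filter Topology

open EntropyFlowPaper

section AuxEntropy

open Finset Filter Topology EntropyFlowPaper

/-- symmetric-KL summand -/
noncomputable def Tm (p q : ℝ) : ℝ := (p - q) * Real.log (p / q)

lemma Tm_symm {p q : ℝ} (hp : p ≠ 0) (hq : q ≠ 0) : Tm p q = Tm q p := by
  unfold Tm
  rw [Real.log_div hp hq, Real.log_div hq hp]; ring

lemma Tm_nonneg {p q : ℝ} (hp : 0 < p) (hq : 0 < q) : 0 ≤ Tm p q := by
  unfold Tm
  rcases le_total p q with h | h
  · have h1 : Real.log (p / q) ≤ 0 :=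
      Real.log_nonpos (by positivity) (div_le_one_of_le₀ h hq.le)
    nlinarith
  · have h1 : 0 ≤ Real.log (p / q) := Real.log_nonneg ((one_le_div hq).2 h)
    nlinarith

lemma Tm_eq_zero {p q : ℝ} (hp : 0 < p) (hq : 0 < q) (h : Tm p q = 0) : p = q := by
  unfold Tm at h
  rcases lt_trichotomy p q with hlt | he | hgt
  · have h1 : Real.log (p / q) < 0 := Real.log_neg (by positivity) ((div_lt_one hq).2 hlt)
    nlinarith
  · exact he
  · have h1 : 0 < Real.log (p / q) := Real.log_pos ((one_lt_div hq).2 hgt)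
    nlinarith

lemma Tm_ge_one {α p : ℝ} (hα0 : 0 < α) (hα1 : α ≤ 1) (hp : 0 < p)
    (hpe : p ≤ α * Real.exp (-(2/α))) : 1 ≤ Tm p α := by
  have h2α : (2:ℝ) ≤ 2/α := by
    rw [le_div_iff₀ hα0]; nlinarith
  have he2 : Real.exp (-(2:ℝ)) ≤ 1/2 := by
    have h1 : Real.exp (-(2:ℝ)) * Real.exp 2 = 1 := by
      rw [← Real.exp_add]; norm_num
    have h2 : (3:ℝ) ≤ Real.exp 2 := by nlinarith [Real.add_one_le_exp (2:ℝ)]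
    nlinarith [Real.exp_pos (-(2:ℝ))]
  have hεhalf : α * Real.exp (-(2/α)) ≤ α / 2 := by
    have h1 : Real.exp (-(2/α)) ≤ Real.exp (-(2:ℝ)) := Real.exp_le_exp.2 (by linarith)
    nlinarith [Real.exp_pos (-(2/α))]
  have hphalf : p ≤ α / 2 := hpe.trans hεhalf
  -- log (α / p) ≥ 2/α
  have hexp_le : Real.exp (2/α) ≤ α / p := by
    rw [le_div_iff₀ hp]
    have h1 : p * Real.exp (2/α) ≤ (α * Real.exp (-(2/α))) * Real.exp (2/α) :=
      mul_le_mul_of_nonneg_right hpe (Real.exp_pos _).le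
    calc Real.exp (2/α) * p = p * Real.exp (2/α) := by ring
      _ ≤ (α * Real.exp (-(2/α))) * Real.exp (2/α) := h1
      _ = α := by rw [mul_assoc, ← Real.exp_add]; simp
  have hL : 2/α ≤ Real.log (α / p) := by
    calc 2/α = Real.log (Real.exp (2/α)) := (Real.log_exp _).symm
      _ ≤ Real.log (α / p) := Real.log_le_log (Real.exp_pos _) hexp_le
  have hflip : Real.log (p / α) = - Real.log (α / p) := by
    rw [Real.log_div hp.ne' hα0.ne', Real.log_div hα0.ne' hp.ne']; ring
  unfold Tm
  rw [hflip]
  have hLpos : 0 < Real.log (α / p) := lt_of_lt_of_le (by positivity) hL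
  calc (1:ℝ) = (α/2) * (2/α) := by field_simp
    _ ≤ (α/2) * Real.log (α / p) := mul_le_mul_of_nonneg_left hL (by positivity)
    _ ≤ (α - p) * Real.log (α / p) := mul_le_mul_of_nonneg_right (by linarith) hLpos.le
    _ = (p - α) * (- Real.log (α / p)) := by ring

/-- The explicit edge entropy for edge `xy` of the triangle, with `A = w_{xy}`, `B = w_{yz}`,
`C = w_{xz}`. -/
noncomputable def Dxy (α A B C : ℝ) : ℝ :=
  Tm α ((1-α)*(A/(A+B))) + Tm ((1-α)*(A/(A+C))) α +
    Tm ((1-α)*(C/(C+A))) ((1-α)*(B/(B+A)))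

lemma ratio_pos {α A B : ℝ} (hα1 : α < 1) (hA : 0 < A) (hB : 0 < B) :
    0 < (1-α)*(A/(A+B)) :=
  mul_pos (by linarith) (div_pos hA (by linarith))

lemma Dxy_nonneg {α A B C : ℝ} (hα0 : 0 < α) (hα1 : α < 1)
    (hA : 0 < A) (hB : 0 < B) (hC : 0 < C) : 0 ≤ Dxy α A B C := by
  have r1 := ratio_pos hα1 hA hB
  have r2 := ratio_pos hα1 hA hC
  have r3 := ratio_pos hα1 hC hA
  have r4 := ratio_pos hα1 hB hA
  have t1 := Tm_nonneg hα0 r1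
  have t2 := Tm_nonneg r2 hα0
  have t3 := Tm_nonneg r3 r4
  unfold Dxy; linarith

lemma ratio_eq {α u v : ℝ} (hu : 0 < u) (hv : 0 < v)
    (h : (1-α)*(u/(u+v)) = α) : (1-α)*u = α*(u+v) := by
  have huv : u + v ≠ 0 := by positivity
  rw [← mul_div_assoc, div_eq_iff huv] at h
  linarith

lemma Dxy_pair_pos {α A B C : ℝ} (hα0 : 0 < α) (hα1 : α < 1) (hα3 : α ≠ 1/3)
    (hA : 0 < A) (hB : 0 < B) (hC : 0 < C) :
    0 < Dxy α A B C + Dxy α B C A := by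
  have h1 := Dxy_nonneg hα0 hα1 hA hB hC
  have h2 := Dxy_nonneg hα0 hα1 hB hC hA
  rcases lt_or_eq_of_le (add_nonneg h1 h2) with h | h
  · exact h
  exfalso
  -- all six Tm terms vanish
  have r1 := ratio_pos hα1 hA hB
  have r2 := ratio_pos hα1 hA hC
  have r3 := ratio_pos hα1 hC hA
  have r4 := ratio_pos hα1 hB hA
  have r1' := ratio_pos hα1 hB hC
  have r2' := ratio_pos hα1 hB hA
  have r3' := ratio_pos hα1 hA hB
  have r4' := ratio_pos hα1 hC hB
  have t1 := Tm_nonneg hα0 r1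
  have t2 := Tm_nonneg r2 hα0
  have t3 := Tm_nonneg r3 r4
  have t1' := Tm_nonneg hα0 r1'
  have t2' := Tm_nonneg r2' hα0
  have t3' := Tm_nonneg r3' r4'
  unfold Dxy at h
  have e1 : α = (1-α)*(A/(A+B)) := Tm_eq_zero hα0 r1 (by linarith)
  have e2 : (1-α)*(B/(B+A)) = α := Tm_eq_zero r2' hα0 (by linarith)
  have e1' : (1-α)*A = α*(A+B) := ratio_eq hA hB e1.symm
  have e2' : (1-α)*B = α*(B+A) := ratio_eq hB hA e2
  have h5 : (1 - 3*α) * (A+B) = 0 := by linear_combination e1' + e2'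
  have h6 : A + B ≠ 0 := by positivity
  have : 1 - 3*α = 0 := by
    rcases mul_eq_zero.1 h5 with h | h
    · exact h
    · exact absurd h h6
  exact hα3 (by linarith)

end AuxEntropy

section AuxBridge
open Finset Filter Topology EntropyFlowPaper

lemma triangle_layers : ∀ x : Fin 3,
    layer (⊤ : SimpleGraph (Fin 3)) x 0 = {x} ∧
    layer (⊤ : SimpleGraph (Fin 3)) x 1 = {x}ᶜ ∧
    layer (⊤ : SimpleGraph (Fin 3)) x 2 = ∅ ∧
    layer (⊤ : SimpleGraph (Fin 3)) x 3 = ∅ := by decide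

lemma compl_eq_pair : ∀ x v u : Fin 3, x ≠ v → x ≠ u → v ≠ u →
    ({x}ᶜ : Finset (Fin 3)) = {v, u} := by decide

lemma univ_eq_triple : ∀ x y z : Fin 3, x ≠ y → x ≠ z → y ≠ z →
    (univ : Finset (Fin 3)) = {x, y, z} := by decide

lemma exists_third : ∀ x y : Fin 3, ∃ z, z ≠ x ∧ z ≠ y := by decide

lemma lazyWalk_self (w : Sym2 (Fin 3) → ℝ) (α : ℝ) (x : Fin 3) :
    lazyWalk ⊤ w α x x = α := by
  unfold lazyWalk; simp

lemma outP_one (w : Sym2 (Fin 3) → ℝ) (x v u : Fin 3)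
    (hxv : x ≠ v) (hxu : x ≠ u) (hvu : v ≠ u) :
    outP ⊤ w x 1 v = w s(x,v) / (w s(x,v) + w s(x,u)) := by
  obtain ⟨l0, l1, l2, l3⟩ := triangle_layers x
  have hcomp := compl_eq_pair x v u hxv hxu hvu
  show outP ⊤ w x (0+1) v = _
  rw [outP]
  rw [show (0+1 : ℕ) = 1 from rfl, l0, l1, hcomp, Finset.sum_singleton,
    Finset.sum_pair hvu]
  rw [outP]
  simp only [if_pos rfl]
  unfold ew
  rw [if_pos (by simp [hxv] : (⊤ : SimpleGraph (Fin 3)).Adj x v),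
    if_pos (by simp [hxu] : (⊤ : SimpleGraph (Fin 3)).Adj x u)]
  simp

lemma lazyWalk_ne (w : Sym2 (Fin 3) → ℝ) (α : ℝ) (x v u : Fin 3)
    (hxv : x ≠ v) (hxu : x ≠ u) (hvu : v ≠ u) :
    lazyWalk ⊤ w α x v = (1 - α) * (w s(x,v) / (w s(x,v) + w s(x,u))) := by
  obtain ⟨l0, l1, l2, l3⟩ := triangle_layers x
  unfold lazyWalk
  rw [if_neg (Ne.symm hxv)]
  rw [show Finset.Icc 1 (Fintype.card (Fin 3)) = ({1,2,3} : Finset ℕ) by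
    rw [Fintype.card_fin]; decide]
  rw [Finset.sum_insert (by decide), Finset.sum_insert (by decide),
    Finset.sum_singleton]
  rw [if_pos (by simp [l1, Ne.symm hxv] : v ∈ layer (⊤ : SimpleGraph (Fin 3)) x 1)]
  rw [if_neg (by simp [(l2 : layer (⊤ : SimpleGraph (Fin 3)) x (1+1) = ∅)] :
    ¬ ∃ u' ∈ layer (⊤ : SimpleGraph (Fin 3)) x (1+1), (⊤ : SimpleGraph (Fin 3)).Adj v u')]
  rw [if_neg (by simp [l2] : v ∉ layer (⊤ : SimpleGraph (Fin 3)) x 2)]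
  rw [if_neg (by simp [l3] : v ∉ layer (⊤ : SimpleGraph (Fin 3)) x 3)]
  rw [outP_one w x v u hxv hxu hvu]
  ring

lemma KL_pair (p q : ℝ) (hp : p ≠ 0) (hq : q ≠ 0) :
    p * Real.log (p/q) + q * Real.log (q/p) = Tm p q := by
  unfold Tm
  rw [Real.log_div hp hq, Real.log_div hq hp]; ring

lemma entropyD_eq (α : ℝ) (hα0 : 0 < α) (hα1 : α < 1) (w : Sym2 (Fin 3) → ℝ)
    (hw : ∀ a b : Fin 3, a ≠ b → 0 < w s(a,b)) (x y z : Fin 3)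
    (hxy : x ≠ y) (hxz : x ≠ z) (hyz : y ≠ z) :
    entropyD ⊤ w α x y = Dxy α (w s(x,y)) (w s(y,z)) (w s(x,z)) := by
  have expand : ∀ f : Fin 3 → ℝ, ∑ v, f v = f x + f y + f z := by
    intro f
    rw [univ_eq_triple x y z hxy hxz hyz,
      Finset.sum_insert (by simp [hxy, hxz]),
      Finset.sum_insert (by simp [hyz]), Finset.sum_singleton]
    ring
  have Rxx := lazyWalk_self w α x
  have Ryy := lazyWalk_self w α y
  have Rxy := lazyWalk_ne w α x y z hxy hxz hyz
  have Rxz := lazyWalk_ne w α x z y hxz hxy (Ne.symm hyz)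
  have Ryx := lazyWalk_ne w α y x z (Ne.symm hxy) hyz hxz
  have Ryz := lazyWalk_ne w α y z x hyz (Ne.symm hxy) (Ne.symm hxz)
  rw [show (s(y,x) : Sym2 (Fin 3)) = s(x,y) from Sym2.eq_swap] at Ryx Ryz
  -- positivity
  have hA := hw x y hxy
  have hB := hw y z hyz
  have hC := hw x z hxz
  have r1 : 0 < (1-α)*(w s(x,y)/(w s(x,y)+w s(y,z))) := ratio_pos hα1 hA hB
  have r2 : 0 < (1-α)*(w s(x,y)/(w s(x,y)+w s(x,z))) := ratio_pos hα1 hA hC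
  have r3 : 0 < (1-α)*(w s(x,z)/(w s(x,z)+w s(x,y))) := ratio_pos hα1 hC hA
  have r4 : 0 < (1-α)*(w s(y,z)/(w s(y,z)+w s(x,y))) := ratio_pos hα1 hB hA
  unfold entropyD KL
  rw [expand, expand, Rxx, Ryy, Rxy, Rxz, Ryx, Ryz]
  unfold Dxy
  rw [← KL_pair α ((1-α)*(w s(x,y)/(w s(x,y)+w s(y,z)))) hα0.ne' r1.ne',
    ← KL_pair ((1-α)*(w s(x,y)/(w s(x,y)+w s(x,z)))) α r2.ne' hα0.ne',
    ← KL_pair ((1-α)*(w s(x,z)/(w s(x,z)+w s(x,y))))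
      ((1-α)*(w s(y,z)/(w s(y,z)+w s(x,y)))) r3.ne' r4.ne']
  ring

end AuxBridge

section AuxAnalysis
open Finset Filter Topology EntropyFlowPaper Set

lemma contOn_Tm {X : Type*} [TopologicalSpace X] {s : Set X} {f g : X → ℝ}
    (hf : ContinuousOn f s) (hg : ContinuousOn g s)
    (hf0 : ∀ x ∈ s, 0 < f x) (hg0 : ∀ x ∈ s, 0 < g x) :
    ContinuousOn (fun x => Tm (f x) (g x)) s := by
  unfold Tm
  exact (hf.sub hg).mul (ContinuousOn.log (hf.div hg fun x hx => (hg0 x hx).ne')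
    fun x hx => (div_pos (hf0 x hx) (hg0 x hx)).ne')

lemma contOn_ratio {X : Type*} [TopologicalSpace X] {s : Set X} {f g : X → ℝ} (α : ℝ)
    (hf : ContinuousOn f s) (hg : ContinuousOn g s)
    (hfpos : ∀ x ∈ s, 0 < f x) (hgpos : ∀ x ∈ s, 0 < g x) :
    ContinuousOn (fun x => (1-α)*(f x/(f x + g x))) s :=
  continuousOn_const.mul (hf.div (hf.add hg)
    fun x hx => (add_pos (hfpos x hx) (hgpos x hx)).ne')

lemma exists_lb (α : ℝ) (hα0 : 0 < α) (hα1 : α < 1) (hα3 : α ≠ 1/3)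
    (m M : ℝ) (hm : 0 < m) :
    ∃ c, 0 < c ∧ ∀ A B C : ℝ, A ∈ Set.Icc m M → B ∈ Set.Icc m M → C ∈ Set.Icc m M →
      c ≤ Dxy α A B C + Dxy α B C A := by
  rcases le_or_gt m M with hmM | hmM
  · set K : Set (ℝ × ℝ × ℝ) := (Set.Icc m M) ×ˢ (Set.Icc m M) ×ˢ (Set.Icc m M) with hKdef
    have hK : IsCompact K := isCompact_Icc.prod (isCompact_Icc.prod isCompact_Icc)
    have hne : K.Nonempty := ⟨(m, m, m), ⟨⟨le_refl m, hmM⟩, ⟨le_refl m, hmM⟩, ⟨le_refl m, hmM⟩⟩⟩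
    have hfA : ContinuousOn (fun p : ℝ×ℝ×ℝ => p.1) K := continuous_fst.continuousOn
    have hfB : ContinuousOn (fun p : ℝ×ℝ×ℝ => p.2.1) K :=
      (continuous_fst.comp continuous_snd).continuousOn
    have hfC : ContinuousOn (fun p : ℝ×ℝ×ℝ => p.2.2) K :=
      (continuous_snd.comp continuous_snd).continuousOn
    have hApos : ∀ p ∈ K, 0 < p.1 := fun p hp => lt_of_lt_of_le hm hp.1.1
    have hBpos : ∀ p ∈ K, (0:ℝ) < p.2.1 := fun p hp => lt_of_lt_of_le hm hp.2.1.1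
    have hCpos : ∀ p ∈ K, (0:ℝ) < p.2.2 := fun p hp => lt_of_lt_of_le hm hp.2.2.1
    have hαc : ∀ p ∈ K, (0:ℝ) < α := fun _ _ => hα0
    have hratio : ∀ (f g : ℝ×ℝ×ℝ → ℝ), ContinuousOn f K → ContinuousOn g K →
        (∀ p ∈ K, 0 < f p) → (∀ p ∈ K, 0 < g p) →
        ContinuousOn (fun p => (1-α)*(f p/(f p + g p))) K ∧
          ∀ p ∈ K, 0 < (1-α)*(f p/(f p + g p)) := by
      intro f g hf hg hfp hgp
      exact ⟨contOn_ratio α hf hg hfp hgp,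
        fun p hp => ratio_pos hα1 (hfp p hp) (hgp p hp)⟩
    obtain ⟨c1, c1p⟩ := hratio _ _ hfA hfB hApos hBpos
    obtain ⟨c2, c2p⟩ := hratio _ _ hfA hfC hApos hCpos
    obtain ⟨c3, c3p⟩ := hratio _ _ hfC hfA hCpos hApos
    obtain ⟨c4, c4p⟩ := hratio _ _ hfB hfA hBpos hApos
    obtain ⟨c1', c1p'⟩ := hratio _ _ hfB hfC hBpos hCpos
    obtain ⟨c4', c4p'⟩ := hratio _ _ hfC hfB hCpos hBpos
    have hcont : ContinuousOn
        (fun p : ℝ×ℝ×ℝ => Dxy α p.1 p.2.1 p.2.2 + Dxy α p.2.1 p.2.2 p.1) K := by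
      unfold Dxy
      apply ContinuousOn.add
      · exact ((contOn_Tm continuousOn_const c1 hαc c1p).add
          (contOn_Tm c2 continuousOn_const c2p hαc)).add
          (contOn_Tm c3 c4 c3p c4p)
      · exact ((contOn_Tm continuousOn_const c1' hαc c1p').add
          (contOn_Tm c4 continuousOn_const c4p hαc)).add
          (contOn_Tm c1 c4' c1p c4p')
    obtain ⟨p0, hp0K, hp0min⟩ := hK.exists_isMinOn hne hcont
    have hmin := isMinOn_iff.1 hp0min
    refine ⟨Dxy α p0.1 p0.2.1 p0.2.2 + Dxy α p0.2.1 p0.2.2 p0.1,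
      Dxy_pair_pos hα0 hα1 hα3 (hApos p0 hp0K) (hBpos p0 hp0K) (hCpos p0 hp0K), ?_⟩
    intro A B C hA hB hC
    exact hmin (A, B, C) ⟨hA, hB, hC⟩
  · exact ⟨1, one_pos, fun A B C hA _ _ => absurd (hA.1.trans hA.2) hmM.not_ge⟩

lemma linGrowth (f d : ℝ → ℝ) (c t0 : ℝ) (ht0 : 0 ≤ t0)
    (hf : ∀ t ∈ Set.Ici (0:ℝ), HasDerivWithinAt f (d t) (Set.Ici 0) t)
    (hd : ∀ t, t0 ≤ t → c ≤ d t) :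
    ∀ t, t0 ≤ t → f t0 + c * (t - t0) ≤ f t := by
  intro t ht
  have hmono : MonotoneOn (fun τ => f τ - c * τ) (Set.Ici t0) := by
    apply monotoneOn_of_deriv_nonneg (convex_Ici t0)
    · apply ContinuousOn.sub
      · exact fun τ hτ => ((hf τ (le_trans ht0 hτ)).continuousWithinAt).mono
          (Set.Ici_subset_Ici.2 ht0)
      · exact (continuous_const.mul continuous_id).continuousOn
    · intro τ hτ
      rw [interior_Ici] at hτ
      have hτ0 : 0 < τ := lt_of_le_of_lt ht0 hτ
      have h1 : HasDerivAt f (d τ) τ := (hf τ hτ0.le).hasDerivAt (Ici_mem_nhds hτ0)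
      exact ((h1.sub ((hasDerivAt_id τ).const_mul c)).differentiableAt).differentiableWithinAt
    · intro τ hτ
      rw [interior_Ici] at hτ
      have hτ0 : 0 < τ := lt_of_le_of_lt ht0 hτ
      have h1 : HasDerivAt f (d τ) τ := (hf τ hτ0.le).hasDerivAt (Ici_mem_nhds hτ0)
      have h2 : HasDerivAt (fun τ => f τ - c * τ) (d τ - c) τ := by
        simpa using h1.fun_sub ((hasDerivAt_id τ).const_mul c)
      rw [h2.deriv]
      have := hd τ hτ.le
      linarith
  have := hmono Set.self_mem_Ici (show t ∈ Set.Ici t0 from ht) ht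
  simp only at this
  linarith

end AuxAnalysis


/-- on the triangle, if `α ≠ 1/3`, then along the unique global solution of the
entropy flow every edge weight tends to `+∞`. -/
theorem entropyFlow_triangle_weights_tendsto_top
    (α : ℝ) (hα : α ∈ Set.Ioo (0 : ℝ) 1) (hα3 : α ≠ 1 / 3)
    (w0 : Sym2 (Fin 3) → ℝ)
    (hw0 : ∀ e ∈ (⊤ : SimpleGraph (Fin 3)).edgeFinset, 0 < w0 e)
    (w : ℝ → Sym2 (Fin 3) → ℝ)
    (hsol : IsEntropyFlowSolutionOn (⊤ : SimpleGraph (Fin 3)) α w0 (Set.Ici 0) w) :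
    ∀ x y : Fin 3, x ≠ y → Tendsto (fun t => w t s(x, y)) atTop atTop := by
  obtain ⟨hα0, hα1⟩ := hα
  obtain ⟨hinit, hpos, hderiv⟩ := hsol
  have hedge : ∀ a b : Fin 3, a ≠ b → s(a,b) ∈ (⊤ : SimpleGraph (Fin 3)).edgeFinset := by
    intro a b h
    simp [SimpleGraph.mem_edgeFinset, h]
  have hwpos : ∀ t, 0 ≤ t → ∀ a b : Fin 3, a ≠ b → 0 < w t s(a,b) :=
    fun t ht a b hab => hpos t ht _ (hedge a b hab)
  have hD : ∀ t, 0 ≤ t → ∀ a b c : Fin 3, a ≠ b → a ≠ c → b ≠ c →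
      HasDerivWithinAt (fun τ => w τ s(a,b))
        (Dxy α (w t s(a,b)) (w t s(b,c)) (w t s(a,c))) (Set.Ici 0) t := by
    intro t ht a b c hab hac hbc
    have h := hderiv t ht a b (by simp [hab])
    rwa [entropyD_eq α hα0 hα1 (w t) (fun p q hpq => hwpos t ht p q hpq) a b c
      hab hac hbc] at h
  have hDnn : ∀ t, 0 ≤ t → ∀ a b c : Fin 3, a ≠ b → a ≠ c → b ≠ c →
      0 ≤ Dxy α (w t s(a,b)) (w t s(b,c)) (w t s(a,c)) :=
    fun t ht a b c hab hac hbc =>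
      Dxy_nonneg hα0 hα1 (hwpos t ht a b hab) (hwpos t ht b c hbc) (hwpos t ht a c hac)
  have hmono : ∀ a b : Fin 3, a ≠ b → ∀ s t : ℝ, 0 ≤ s → s ≤ t →
      w s s(a,b) ≤ w t s(a,b) := by
    intro a b hab s t hs hst
    obtain ⟨c, hca, hcb⟩ := exists_third a b
    have := linGrowth (fun τ => w τ s(a,b))
      (fun τ => Dxy α (w τ s(a,b)) (w τ s(b,c)) (w τ s(a,c))) 0 s hs
      (fun τ hτ => hD τ hτ a b c hab (Ne.symm hca) (Ne.symm hcb))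
      (fun τ hτ => hDnn τ (le_trans hs hτ) a b c hab (Ne.symm hca) (Ne.symm hcb)) t hst
    linarith
  suffices H : ∀ x y : Fin 3, x ≠ y → ∀ M : ℝ, ∃ t, 0 ≤ t ∧ M ≤ w t s(x,y) by
    intro x y hxy
    rw [tendsto_atTop]
    intro M
    obtain ⟨t0, ht0, hM⟩ := H x y hxy M
    filter_upwards [eventually_ge_atTop t0] with t ht
    exact hM.trans (hmono x y hxy t0 t ht0 ht)
  by_contra hcon
  push_neg at hcon
  obtain ⟨x, y, hxy, M0, hM0⟩ := hcon
  obtain ⟨z, hzx, hzy⟩ := exists_third x y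
  have hxz : x ≠ z := Ne.symm hzx
  have hyz : y ≠ z := Ne.symm hzy
  -- all weights bounded is impossible
  have hbdd : ∀ Mb : ℝ, (∀ t, 0 ≤ t → w t s(x,z) ≤ Mb) →
      (∀ t, 0 ≤ t → w t s(y,z) ≤ Mb) → False := by
    intro Mb hb1 hb2
    set m := min (min (w0 s(x,y)) (w0 s(y,z))) (w0 s(x,z)) with hmdef
    have hm : 0 < m :=
      lt_min (lt_min (hw0 _ (hedge x y hxy)) (hw0 _ (hedge y z hyz)))
        (hw0 _ (hedge x z hxz))
    set M2 := max M0 Mb with hM2def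
    obtain ⟨c, hc, hlb⟩ := exists_lb α hα0 hα1 hα3 m M2 hm
    have hmem : ∀ t, 0 ≤ t → w t s(x,y) ∈ Set.Icc m M2 ∧
        w t s(y,z) ∈ Set.Icc m M2 ∧ w t s(x,z) ∈ Set.Icc m M2 := by
      intro t ht
      have i1 := hinit _ (hedge x y hxy)
      have i2 := hinit _ (hedge y z hyz)
      have i3 := hinit _ (hedge x z hxz)
      have d1 := hmono x y hxy 0 t le_rfl ht
      have d2 := hmono y z hyz 0 t le_rfl ht
      have d3 := hmono x z hxz 0 t le_rfl ht
      have l1 : m ≤ w0 s(x,y) := le_trans (min_le_left _ _) (min_le_left _ _)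
      have l2 : m ≤ w0 s(y,z) := le_trans (min_le_left _ _) (min_le_right _ _)
      have l3 : m ≤ w0 s(x,z) := min_le_right _ _
      refine ⟨⟨by linarith, le_trans (hM0 t ht).le (le_max_left _ _)⟩,
        ⟨by linarith, le_trans (hb2 t ht) (le_max_right _ _)⟩,
        ⟨by linarith, le_trans (hb1 t ht) (le_max_right _ _)⟩⟩
    have hderivsum : ∀ t ∈ Set.Ici (0:ℝ),
        HasDerivWithinAt (fun τ => w τ s(x,y) + w τ s(y,z))
          (Dxy α (w t s(x,y)) (w t s(y,z)) (w t s(x,z)) +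
            Dxy α (w t s(y,z)) (w t s(x,z)) (w t s(x,y))) (Set.Ici 0) t := by
      intro t ht
      have h1 := hD t ht x y z hxy hxz hyz
      have h2 := hD t ht y z x hyz (Ne.symm hxy) (Ne.symm hxz)
      rw [show (s(z,x) : Sym2 (Fin 3)) = s(x,z) from Sym2.eq_swap,
        show (s(y,x) : Sym2 (Fin 3)) = s(x,y) from Sym2.eq_swap] at h2
      exact h1.add h2
    have hgrow := linGrowth (fun τ => w τ s(x,y) + w τ s(y,z))
      (fun t => Dxy α (w t s(x,y)) (w t s(y,z)) (w t s(x,z)) +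
        Dxy α (w t s(y,z)) (w t s(x,z)) (w t s(x,y))) c 0 le_rfl hderivsum
      (fun t ht => by
        obtain ⟨m1, m2, m3⟩ := hmem t ht
        exact hlb _ _ _ m1 m2 m3)
    set g0 := w 0 s(x,y) + w 0 s(y,z) with hg0def
    set t1 := max 0 ((2*M2 - g0)/c + 1) with ht1def
    have ht1 : 0 ≤ t1 := le_max_left _ _
    have hgt := hgrow t1 ht1
    obtain ⟨mm1, mm2, mm3⟩ := hmem t1 ht1
    have hkey : 2*M2 - g0 + c ≤ c * t1 := by
      have h1 : (2*M2 - g0)/c + 1 ≤ t1 := le_max_right _ _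
      have h2 : c * ((2*M2 - g0)/c + 1) = 2*M2 - g0 + c := by field_simp
      nlinarith
    have hup : w t1 s(x,y) + w t1 s(y,z) ≤ 2 * M2 := by
      have := mm1.2; have := mm2.2; linarith
    have hgt' : g0 + c * (t1 - 0) ≤ w t1 s(x,y) + w t1 s(y,z) := hgt
    nlinarith [hgt', hkey, hup, hc]
  have hM0pos : 0 < M0 := lt_trans (hwpos 0 le_rfl x y hxy) (hM0 0 le_rfl)
  set ε := α * Real.exp (-(2/α)) with hεdef
  have hε : 0 < ε := by positivity
  have hNpos : 0 < M0/ε + 1 := by positivity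
  have hub : (∀ N : ℝ, ∃ t, 0 ≤ t ∧ N ≤ w t s(x,z)) ∨
      (∀ N : ℝ, ∃ t, 0 ≤ t ∧ N ≤ w t s(y,z)) := by
    by_contra hno
    push_neg at hno
    obtain ⟨⟨N1, hN1⟩, ⟨N2, hN2⟩⟩ := hno
    exact hbdd (max N1 N2)
      (fun t ht => le_trans (hN1 t ht).le (le_max_left _ _))
      (fun t ht => le_trans (hN2 t ht).le (le_max_right _ _))
  have hM4 : ∀ t, 0 ≤ t → M0/(M0/ε+1) ≤ ε ∧ w t s(x,y) ≤ M0 := by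
    intro t ht
    constructor
    · rw [div_le_iff₀ hNpos]
      have he : ε * (M0/ε + 1) = M0 + ε := by field_simp
      linarith
    · exact (hM0 t ht).le
  rcases hub with hu | hu
  · -- w s(x,z) unbounded
    obtain ⟨t1, ht1, hN⟩ := hu (M0/ε + 1)
    have hge1 : ∀ t, t1 ≤ t →
        1 ≤ Dxy α (w t s(x,y)) (w t s(y,z)) (w t s(x,z)) := by
      intro t ht
      have ht0 : 0 ≤ t := le_trans ht1 ht
      have hA := hwpos t ht0 x y hxy
      have hB := hwpos t ht0 y z hyz
      have hC := hwpos t ht0 x z hxz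
      have hCt : M0/ε + 1 ≤ w t s(x,z) := le_trans hN (hmono x z hxz t1 t ht1 ht)
      set A := w t s(x,y) with hAdef
      set B := w t s(y,z) with hBdef
      set C := w t s(x,z) with hCdef
      have hp : 0 < (1-α)*(A/(A+C)) := ratio_pos hα1 hA hC
      have hple : (1-α)*(A/(A+C)) ≤ ε := by
        have h1 : A/(A+C) ≤ A/C := by
          apply div_le_div_of_nonneg_left hA.le hC; linarith
        have h2 : A/C ≤ M0/C := by
          apply div_le_div_of_nonneg_right ?_ hC.le
          exact (hM4 t ht0).2
        have h3 : M0/C ≤ M0/(M0/ε+1) := by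
          apply div_le_div_of_nonneg_left hM0pos.le hNpos hCt
        have h4 := (hM4 t ht0).1
        have h5 : 0 ≤ A/(A+C) := by positivity
        nlinarith
      have hT := Tm_ge_one hα0 hα1.le hp hple
      have n1 := Tm_nonneg hα0 (ratio_pos hα1 hA hB)
      have n3 := Tm_nonneg (ratio_pos hα1 hC hA) (ratio_pos hα1 hB hA)
      unfold Dxy
      linarith
    have hgrow := linGrowth (fun τ => w τ s(x,y))
      (fun τ => Dxy α (w τ s(x,y)) (w τ s(y,z)) (w τ s(x,z))) 1 t1 ht1
      (fun τ hτ => hD τ hτ x y z hxy hxz hyz) hge1 (t1 + M0) (by linarith)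
    have hlt := hM0 (t1 + M0) (by linarith)
    have hw1 := hwpos t1 ht1 x y hxy
    nlinarith [hgrow]
  · -- w s(y,z) unbounded
    obtain ⟨t1, ht1, hN⟩ := hu (M0/ε + 1)
    have hge1 : ∀ t, t1 ≤ t →
        1 ≤ Dxy α (w t s(x,y)) (w t s(y,z)) (w t s(x,z)) := by
      intro t ht
      have ht0 : 0 ≤ t := le_trans ht1 ht
      have hA := hwpos t ht0 x y hxy
      have hB := hwpos t ht0 y z hyz
      have hC := hwpos t ht0 x z hxz
      have hBt : M0/ε + 1 ≤ w t s(y,z) := le_trans hN (hmono y z hyz t1 t ht1 ht)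
      set A := w t s(x,y) with hAdef
      set B := w t s(y,z) with hBdef
      set C := w t s(x,z) with hCdef
      have hq : 0 < (1-α)*(A/(A+B)) := ratio_pos hα1 hA hB
      have hqle : (1-α)*(A/(A+B)) ≤ ε := by
        have h1 : A/(A+B) ≤ A/B := by
          apply div_le_div_of_nonneg_left hA.le hB; linarith
        have h2 : A/B ≤ M0/B := by
          apply div_le_div_of_nonneg_right ?_ hB.le
          exact (hM4 t ht0).2
        have h3 : M0/B ≤ M0/(M0/ε+1) := by
          apply div_le_div_of_nonneg_left hM0pos.le hNpos hBt
        have h4 := (hM4 t ht0).1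
        have h5 : 0 ≤ A/(A+B) := by positivity
        nlinarith
      have hT := Tm_ge_one hα0 hα1.le hq hqle
      have hsymm : Tm α ((1-α)*(A/(A+B))) = Tm ((1-α)*(A/(A+B))) α :=
        Tm_symm hα0.ne' hq.ne'
      have n2 := Tm_nonneg (ratio_pos hα1 hA hC) hα0
      have n3 := Tm_nonneg (ratio_pos hα1 hC hA) (ratio_pos hα1 hB hA)
      unfold Dxy
      linarith
    have hgrow := linGrowth (fun τ => w τ s(x,y))
      (fun τ => Dxy α (w τ s(x,y)) (w τ s(y,z)) (w τ s(x,z))) 1 t1 ht1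
      (fun τ hτ => hD τ hτ x y z hxy hxz hyz) hge1 (t1 + M0) (by linarith)
    have hlt := hM0 (t1 + M0) (by linarith)
    have hw1 := hwpos t1 ht1 x y hxy
    nlinarith [hgrow]
end
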